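/- Let A be an associative unital κ-algebra with center Z and let (B_i)_{i≥0} be a formal deformation of A, with bracket {a,b} := B_1(a,b) − B_1(b,a). Then for all f, g ∈ Z and a ∈ A the exact identity {fg, a} = f{g,a} + g{f,a} + [a, B_1(f,g)] holds. In particular, if B_1(f,g) ∈ Z for all f,g ∈ Z, then {fg,a} = f{g,a} + g{f,a}, and the bracket {·,·} restricted to Z × A makes (A, Z) a Poisson fibred algebra: {f,g} ∈ Z for f,g ∈ Z, the restriction to Z × Z is antisymmetric and satisfies the Jacobi identity, {f,ab} = {f,a}b + a{f,b}, and {fg,a} = f{g,a} + g{f,a}. -/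
import Mathlib


/-- The first-order bracket `{a,b} := B₁(a,b) − B₁(b,a)` of a formal deformation. -/
def deformationBracket {κ : Type*} [Field κ] {A : Type*} [Ring A] [Algebra κ A]
    (B : ℕ → A →ₗ[κ] A →ₗ[κ] A) (a b : A) : A :=
  B 1 a b - B 1 b a

section Aux

variable {κ : Type*} [Field κ] {A : Type*} [Ring A] [Algebra κ A]

/-- The order-1 associativity (Hochschild cocycle) identity. -/
private lemma deformation_coc1 (B : ℕ → A →ₗ[κ] A →ₗ[κ] A)
    (hB0 : ∀ a b : A, B 0 a b = a * b)
    (hassoc : ∀ (n : ℕ) (a b c : A),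
      ∑ i ∈ Finset.range (n + 1), B i (B (n - i) a b) c
        = ∑ i ∈ Finset.range (n + 1), B i a (B (n - i) b c))
    (a b c : A) :
    B 1 a b * c + B 1 (a * b) c = a * B 1 b c + B 1 a (b * c) := by
  have h := hassoc 1 a b c
  simpa [Finset.sum_range_succ, hB0] using h

/-- The order-2 associativity identity. -/
private lemma deformation_coc2 (B : ℕ → A →ₗ[κ] A →ₗ[κ] A)
    (hB0 : ∀ a b : A, B 0 a b = a * b)
    (hassoc : ∀ (n : ℕ) (a b c : A),
      ∑ i ∈ Finset.range (n + 1), B i (B (n - i) a b) c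
        = ∑ i ∈ Finset.range (n + 1), B i a (B (n - i) b c))
    (a b c : A) :
    B 2 a b * c + B 1 (B 1 a b) c + B 2 (a * b) c
      = a * B 2 b c + B 1 a (B 1 b c) + B 2 a (b * c) := by
  have h := hassoc 2 a b c
  simpa [Finset.sum_range_succ, hB0, add_assoc] using h

/-- Exact product rule for the bracket on central elements. -/
private lemma deformation_mul_rule (B : ℕ → A →ₗ[κ] A →ₗ[κ] A)
    (coc : ∀ a b c : A, B 1 a b * c + B 1 (a * b) c = a * B 1 b c + B 1 a (b * c))
    (f g a : A) (hf : ∀ x : A, x * f = f * x) (hg : ∀ x : A, x * g = g * x) :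
    B 1 (f * g) a - B 1 a (f * g)
      = f * (B 1 g a - B 1 a g) + g * (B 1 f a - B 1 a f)
          + (a * B 1 f g - B 1 f g * a) := by
  have e1 := coc f g a
  have e2 := coc f a g
  have e3 := coc a f g
  rw [← hg a] at e1
  rw [hf a] at e3
  linear_combination (norm := noncomm_ring) e1 - e2 + e3 + hg (B 1 f a) - hg (B 1 a f)

/-- Leibniz rule for the bracket with a central first argument. -/
private lemma deformation_leibniz (B : ℕ → A →ₗ[κ] A →ₗ[κ] A)
    (coc : ∀ a b c : A, B 1 a b * c + B 1 (a * b) c = a * B 1 b c + B 1 a (b * c))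
    (f a b : A) (hf : ∀ x : A, x * f = f * x) :
    B 1 f (a * b) - B 1 (a * b) f
      = (B 1 f a - B 1 a f) * b + a * (B 1 f b - B 1 b f) := by
  have e1 := coc f a b
  have e2 := coc a b f
  have e3 := coc a f b
  rw [← hf a] at e1
  rw [hf b] at e2
  linear_combination (norm := noncomm_ring) -e1 - e2 + e3 + hf (B 1 a b)

/-- Jacobi identity for the bracket on central elements. -/
private lemma deformation_jacobi (B : ℕ → A →ₗ[κ] A →ₗ[κ] A)
    (coc2 : ∀ a b c : A, B 2 a b * c + B 1 (B 1 a b) c + B 2 (a * b) c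
      = a * B 2 b c + B 1 a (B 1 b c) + B 2 a (b * c))
    (f g h : A) (cf : ∀ x : A, x * f = f * x) (cg : ∀ x : A, x * g = g * x)
    (ch : ∀ x : A, x * h = h * x) :
    (B 1 (B 1 f g - B 1 g f) h - B 1 h (B 1 f g - B 1 g f))
    + (B 1 (B 1 g h - B 1 h g) f - B 1 f (B 1 g h - B 1 h g))
    + (B 1 (B 1 h f - B 1 f h) g - B 1 g (B 1 h f - B 1 f h)) = 0 := by
  have cgf : g * f = f * g := cf g
  have chg : h * g = g * h := cg h
  have chf : h * f = f * h := cf h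
  have e1 := coc2 f g h
  have e2 := coc2 g h f
  have e3 := coc2 h f g
  have e4 := coc2 g f h
  have e5 := coc2 f h g
  have e6 := coc2 h g f
  rw [chf] at e2
  rw [chf] at e3
  rw [cgf] at e4
  rw [chg] at e5
  rw [chg, cgf] at e6
  simp only [map_sub, LinearMap.sub_apply]
  linear_combination (norm := noncomm_ring) e1 + e2 + e3 - e4 - e5 - e6
    - ch (B 2 f g) - cf (B 2 g h) - cg (B 2 h f)
    + ch (B 2 g f) + cg (B 2 f h) + cf (B 2 h g)

end Aux

/-- For a formal deformation `(B_i)` of `A` with bracket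
`{a,b} := B₁(a,b) − B₁(b,a)`, one has the exact identity
`{fg, a} = f{g,a} + g{f,a} + [a, B₁(f,g)]` for `f, g ∈ Z`, `a ∈ A`.  In
particular, if `B₁(f,g) ∈ Z` for all `f, g ∈ Z`, the bracket makes `(A, Z)` a
Poisson fibred algebra. -/
theorem deformation_bracket_mul_rule_and_poisson_fibred
    (κ : Type*) [Field κ] [CharZero κ]
    (A : Type*) [Ring A] [Algebra κ A]
    (B : ℕ → A →ₗ[κ] A →ₗ[κ] A)
    (hB0 : ∀ a b : A, B 0 a b = a * b)
    (hassoc : ∀ (n : ℕ) (a b c : A),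
      ∑ i ∈ Finset.range (n + 1), B i (B (n - i) a b) c
        = ∑ i ∈ Finset.range (n + 1), B i a (B (n - i) b c)) :
    (∀ f g : A, f ∈ Subalgebra.center κ A → g ∈ Subalgebra.center κ A → ∀ a : A,
      deformationBracket B (f * g) a
        = f * deformationBracket B g a + g * deformationBracket B f a
          + (a * B 1 f g - B 1 f g * a)) ∧
    ((∀ f g : A, f ∈ Subalgebra.center κ A → g ∈ Subalgebra.center κ A →
        B 1 f g ∈ Subalgebra.center κ A) →
      (∀ f g : A, f ∈ Subalgebra.center κ A → g ∈ Subalgebra.center κ A → ∀ a : A,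
        deformationBracket B (f * g) a
          = f * deformationBracket B g a + g * deformationBracket B f a) ∧
      (∀ f g : A, f ∈ Subalgebra.center κ A → g ∈ Subalgebra.center κ A →
        deformationBracket B f g ∈ Subalgebra.center κ A) ∧
      (∀ f g : A, f ∈ Subalgebra.center κ A → g ∈ Subalgebra.center κ A →
        deformationBracket B f g = - deformationBracket B g f) ∧
      (∀ f g h : A, f ∈ Subalgebra.center κ A → g ∈ Subalgebra.center κ A →
        h ∈ Subalgebra.center κ A →
        deformationBracket B (deformationBracket B f g) h
          + deformationBracket B (deformationBracket B g h) f
          + deformationBracket B (deformationBracket B h f) g = 0) ∧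
      (∀ f : A, f ∈ Subalgebra.center κ A → ∀ a b : A,
        deformationBracket B f (a * b)
          = deformationBracket B f a * b + a * deformationBracket B f b)) := by
  have coc := deformation_coc1 B hB0 hassoc
  have coc2 := deformation_coc2 B hB0 hassoc
  have mulrule : ∀ f g : A, f ∈ Subalgebra.center κ A → g ∈ Subalgebra.center κ A →
      ∀ a : A, deformationBracket B (f * g) a
        = f * deformationBracket B g a + g * deformationBracket B f a
          + (a * B 1 f g - B 1 f g * a) := by
    intro f g hf hg a
    simp only [deformationBracket]
    exact deformation_mul_rule B coc f g a (Subalgebra.mem_center_iff.mp hf)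
      (Subalgebra.mem_center_iff.mp hg)
  refine ⟨mulrule, fun hc => ⟨?_, ?_, ?_, ?_, ?_⟩⟩
  · intro f g hf hg a
    have hz : a * B 1 f g = B 1 f g * a := Subalgebra.mem_center_iff.mp (hc f g hf hg) a
    rw [mulrule f g hf hg a, hz]
    ring_nf
    abel
  · intro f g hf hg
    exact Subalgebra.sub_mem _ (hc f g hf hg) (hc g f hg hf)
  · intro f g _ _
    simp only [deformationBracket, neg_sub]
  · intro f g h hf hg hh
    simp only [deformationBracket]
    exact deformation_jacobi B coc2 f g h (Subalgebra.mem_center_iff.mp hf)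
      (Subalgebra.mem_center_iff.mp hg) (Subalgebra.mem_center_iff.mp hh)
  · intro f hf a b
    simp only [deformationBracket]
    exact deformation_leibniz B coc f a b (Subalgebra.mem_center_iff.mp hf)
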